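/- arXiv:1710.02488 — 6 statements merged into one kernel-verified Lean document; each statement's English description precedes it below -/
import Mathlib

section
/- Let m, d, t, N̂ be natural numbers, A_1, …, A_d real N̂×N̂ matrices, c ∈ ℝ^d, c⁽¹⁾, …, c⁽ᵗ⁾ ∈ ℝ^d and λ_1, …, λ_t ∈ ℝ such that for every multi-index k ∈ κ̄_{m,d} one has ∏_{l=1}^d c_l^{k_l} = Σ_{n=1}^t λ_n ∏_{l=1}^d (c⁽ⁿ⁾_l)^{k_l} (exact interpolation of the functional g on κ̄_{m,d}). Then for every integer 1 ≤ p ≤ m, (Σ_{l=1}^d c_l A_l)^p = Σ_{n=1}^t λ_n (Σ_{l=1}^d c⁽ⁿ⁾_l A_l)^p. -/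
/-! Expanding `(∑ l, c l • A l) ^ p` multilinearly writes it as a sum over words
`A (f 0) ⋯ A (f (p-1))` with coefficient the monomial `∏ l, c l ^ k l`, where `k l` counts the
letters equal to `l`. Since `∑ l, k l = p ≤ m`, the interpolation hypothesis applies to every such
coefficient, word by word, even though the `A l` do not commute. -/

open Finset

section Expansion

variable {R M ι κ : Type*} [CommSemiring R] [Semiring M] [Algebra R M] [Fintype ι]

theorem sum_smul_pow_eq_sum_prod_smul_prod_ofFn (b : ι → R) (A : ι → M) (p : ℕ) :
    (∑ l, b l • A l) ^ p =
      ∑ f : Fin p → ι, (∏ i, b (f i)) • (List.ofFn fun i => A (f i)).prod := by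
  classical
  rw [← MultilinearMap.mkPiAlgebraFin_apply_const (R := R), MultilinearMap.map_sum]
  simp only [MultilinearMap.map_smul_univ, MultilinearMap.mkPiAlgebraFin_apply]

theorem prod_comp_eq_prod_pow_card_fiber {N : Type*} [CommMonoid N] [Fintype κ] [DecidableEq ι]
    (b : ι → N) (f : κ → ι) : ∏ i, b (f i) = ∏ l, b l ^ #{i | f i = l} := by
  simp only [← prod_fiberwise' univ f b, prod_const]

theorem sum_smul_pow_eq_sum_smul_pow_of_prod_pow_eq [Fintype κ] (A : ι → M) (c : ι → R)
    (c' : κ → ι → R) (lam : κ → R) (p : ℕ)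
    (h : ∀ k : ι → ℕ, ∑ l, k l = p → ∏ l, c l ^ k l = ∑ n, lam n * ∏ l, c' n l ^ k l) :
    (∑ l, c l • A l) ^ p = ∑ n, lam n • (∑ l, c' n l • A l) ^ p := by
  classical
  simp only [sum_smul_pow_eq_sum_prod_smul_prod_ofFn, smul_sum, smul_smul]
  rw [sum_comm]
  refine sum_congr rfl fun f _ => ?_
  rw [← sum_smul]
  congr 1
  simp only [prod_comp_eq_prod_pow_card_fiber]
  refine h _ ?_
  rw [← card_eq_sum_card_fiberwise fun i _ => mem_univ (f i), card_univ, Fintype.card_fin]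

end Expansion

theorem exact_interpolation_implies_power_interpolation_general
    (m d t Nhat : ℕ) (A : Fin d → Matrix (Fin Nhat) (Fin Nhat) ℝ)
    (c : Fin d → ℝ) (c' : Fin t → Fin d → ℝ) (lam : Fin t → ℝ)
    (hinterp : ∀ k : Fin d → Fin (m + 1), (∑ l, (k l : ℕ)) ≤ m →
        ∏ l, c l ^ (k l : ℕ) = ∑ n, lam n * ∏ l, c' n l ^ (k l : ℕ))
    (p : ℕ) (hpm : p ≤ m) :
    (∑ l, c l • A l) ^ p = ∑ n, lam n • (∑ l, c' n l • A l) ^ p := by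
  refine sum_smul_pow_eq_sum_smul_pow_of_prod_pow_eq A c c' lam p fun k hk => ?_
  have hkm : ∀ l, k l < m + 1 := fun l =>
    Nat.lt_succ_of_le ((single_le_sum (fun _ _ => Nat.zero_le _) (mem_univ l)).trans (hk ▸ hpm))
  exact hinterp (fun l => ⟨k l, hkm l⟩) (hk ▸ hpm)

/-- Suppose the coefficient functional `g(k, c) = ∏ l, c l ^ k l` is exactly
interpolated on `κ̄_{m,d}` (multi-indices `k ∈ {0,…,m}^d` with `∑ l, k l ≤ m`):
`∏ l, c l ^ k l = ∑ n, λ n * ∏ l, (c' n l) ^ k l` for every such `k`. Then for every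
`1 ≤ p ≤ m`, `(∑ l, c l • A l) ^ p = ∑ n, λ n • (∑ l, c' n l • A l) ^ p`. -/
theorem exact_interpolation_implies_power_interpolation
    (m d t Nhat : ℕ) (A : Fin d → Matrix (Fin Nhat) (Fin Nhat) ℝ)
    (c : Fin d → ℝ) (c' : Fin t → Fin d → ℝ) (lam : Fin t → ℝ)
    (hinterp : ∀ k : Fin d → Fin (m + 1), (∑ l, (k l : ℕ)) ≤ m →
        ∏ l, c l ^ (k l : ℕ) = ∑ n, lam n * ∏ l, c' n l ^ (k l : ℕ))
    (p : ℕ) (hp1 : 1 ≤ p) (hpm : p ≤ m) :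
    (∑ l, c l • A l) ^ p = ∑ n, lam n • (∑ l, c' n l • A l) ^ p :=
  exact_interpolation_implies_power_interpolation_general m d t Nhat A c c' lam hinterp p hpm
end

section
/- Let A be a real symmetric positive definite n×n matrix and let ρ_M be a real number strictly greater than every eigenvalue of A. Then the series Σ_{k=1}^∞ tr((I − (1/ρ_M) A)^k)/k converges and log(det A) = n·log(ρ_M) − Σ_{k=1}^∞ tr((I − (1/ρ_M) A)^k)/k. -/
/-!
Diagonalising `A` with eigenvalues `λᵢ`, the functional calculus gives
`tr ((1 - ρ⁻¹ • A) ^ k) = ∑ᵢ (1 - λᵢ / ρ) ^ k`. Since `0 < λᵢ / ρ < 1`, each eigenvalue contributes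
the Mercator series `∑ₖ (1 - t) ^ k / k = -log t`, and `-∑ᵢ log (λᵢ / ρ) = n log ρ - log det A`.
-/

open Matrix Real

theorem Real.hasSum_one_sub_pow_div {t : ℝ} (h0 : 0 < t) (h2 : t < 2) :
    HasSum (fun k : ℕ => (1 - t) ^ (k + 1) / (k + 1)) (-log t) := by
  simpa using hasSum_pow_div_log_of_abs_lt_one (x := 1 - t) (abs_lt.2 ⟨by linarith, by linarith⟩)

theorem cfc_one_sub_mul_pow {A : Type*} [Ring A] [StarRing A] [TopologicalSpace A] [Algebra ℝ A]
    [ContinuousFunctionalCalculus ℝ A IsSelfAdjoint] {a : A} (ha : IsSelfAdjoint a) (c : ℝ)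
    (k : ℕ) : cfc (fun x => (1 - c * x) ^ k) a = (1 - c • a) ^ k := by
  rw [cfc_pow .., cfc_sub .., cfc_const_one ℝ a, cfc_const_mul_id c a]

namespace Matrix

variable {n 𝕜 : Type*} [Fintype n] [DecidableEq n] [RCLike 𝕜]

theorem trace_conjStarAlgAut (u : unitary (Matrix n n 𝕜)) (M : Matrix n n 𝕜) :
    (Unitary.conjStarAlgAut 𝕜 _ u M).trace = M.trace := by
  rw [Unitary.conjStarAlgAut_apply, trace_mul_cycle, Unitary.coe_star_mul_self, one_mul]

theorem IsHermitian.trace_cfc {A : Matrix n n 𝕜} (hA : A.IsHermitian) (f : ℝ → ℝ) :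
    (cfc f A).trace = ∑ i, (f (hA.eigenvalues i) : 𝕜) := by
  rw [hA.cfc_eq, IsHermitian.cfc, trace_conjStarAlgAut, trace_diagonal]
  rfl

theorem IsHermitian.hasSum_trace_one_sub_smul_pow_div {A : Matrix n n ℝ} (hA : A.IsHermitian)
    {c : ℝ} (hpos : ∀ i, 0 < c * hA.eigenvalues i) (hlt : ∀ i, c * hA.eigenvalues i < 2) :
    HasSum (fun k : ℕ => ((1 - c • A) ^ (k + 1)).trace / (k + 1))
      (-∑ i, log (c * hA.eigenvalues i)) := by
  have h := hasSum_sum fun i (_ : i ∈ Finset.univ) => Real.hasSum_one_sub_pow_div (hpos i) (hlt i)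
  simp only [← Finset.sum_div, Finset.sum_neg_distrib] at h
  convert h using 2 with k
  rw [← cfc_one_sub_mul_pow hA.isSelfAdjoint, hA.trace_cfc]
  rfl

end Matrix

/-- Let `A` be a real symmetric positive definite `n × n` matrix and `ρM` a
real number strictly greater than every eigenvalue of `A`. Then the series
`∑_{k=1}^∞ tr((I − ρM⁻¹ • A) ^ k) / k` converges, with sum `n * log ρM − log (det A)`;
equivalently `log (det A) = n * log ρM − ∑_{k=1}^∞ tr((I − ρM⁻¹ • A) ^ k) / k`. -/
theorem logdet_eq_log_rhoM_sub_trace_power_series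
    {n : ℕ} (A : Matrix (Fin n) (Fin n) ℝ) (hA : A.PosDef)
    (ρM : ℝ) (hρM : ∀ i, hA.isHermitian.eigenvalues i < ρM) :
    HasSum (fun k : ℕ => ((1 - ρM⁻¹ • A) ^ (k + 1)).trace / (k + 1 : ℝ))
      (n * Real.log ρM - Real.log A.det) := by
  set μ := hA.isHermitian.eigenvalues
  have hμ : ∀ i, 0 < μ i := hA.eigenvalues_pos
  -- `ρM ≤ 0` is possible when `n = 0`, so positivity of `ρM` is only available given an index.
  have hρ : ∀ i, 0 < ρM := fun i => (hμ i).trans (hρM i)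
  have hlt : ∀ i, ρM⁻¹ * μ i < 1 := fun i => by
    rw [inv_mul_lt_one₀ (hρ i)]; exact hρM i
  convert hA.isHermitian.hasSum_trace_one_sub_smul_pow_div
    (fun i => mul_pos (inv_pos.2 (hρ i)) (hμ i)) (fun i => (hlt i).trans one_lt_two) using 1
  have hlog : ∀ i, log (ρM⁻¹ * μ i) = log (μ i) - log ρM := fun i => by
    rw [log_mul (inv_ne_zero (hρ i).ne') (hμ i).ne', log_inv]; ring
  have hdet : A.det = ∏ i, μ i := by simpa using hA.isHermitian.det_eq_prod_eigenvalues
  rw [hdet, log_prod fun i _ => (hμ i).ne']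
  change _ = -∑ i, log (ρM⁻¹ * μ i)
  simp only [hlog, Finset.sum_sub_distrib, Finset.sum_const, Finset.card_univ, Fintype.card_fin,
    nsmul_eq_mul]
  ring
end

section
/- Let A be a real symmetric n×n matrix and let 0 < ρ₀ ≤ ρ_M be real numbers such that every eigenvalue r of A satisfies ρ₀ ≤ r < ρ_M. Then for every integer m ≥ 1, | −Σ_{k=1}^{m−1} tr((I − (1/ρ_M) A)^k)/k + n·log(ρ_M) − log(det A) | ≤ n (ρ_M/ρ₀) (1 − ρ₀/ρ_M)^m / m. -/
/-!
Diagonalise `A = U diag(λᵢ) U*`. Then `tr((I - A/ρM)^k) = ∑ᵢ xᵢ^k` with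
`xᵢ = 1 - λᵢ/ρM ∈ [0, 1 - ρ₀/ρM]` and `log det A - n log ρM = ∑ᵢ log(1 - xᵢ)`, so the error is a
sum over eigenvalues of tails of `-log(1 - x) = ∑_{k ≥ 1} x^k/k`. The tail from `k = m` on is at
most `(1/m) ∑_{k ≥ m} x^k = x^m / (m (1 - x))`, which is increasing in `x`, and at
`x = 1 - ρ₀/ρM` equals `(ρM/ρ₀)(1 - ρ₀/ρM)^m / m`.
-/

open Real Finset Matrix

theorem abs_sum_range_pow_div_add_log_one_sub_le {x : ℝ} (hx₀ : 0 ≤ x) (hx₁ : x < 1)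
    (n : ℕ) :
    |∑ i ∈ range n, x ^ (i + 1) / (i + 1) + log (1 - x)|
      ≤ x ^ (n + 1) / ((n + 1) * (1 - x)) := by
  have htail : HasSum (fun i : ℕ => x ^ (i + n + 1) / (i + n + 1))
      (-log (1 - x) - ∑ i ∈ range n, x ^ (i + 1) / (i + 1)) := by
    have hlog := hasSum_pow_div_log_of_abs_lt_one (abs_lt.2 ⟨by linarith, hx₁⟩)
    simpa only [Nat.cast_add, add_right_comm] using (hasSum_nat_add_iff' n).2 hlog
  have hgeom := (hasSum_geometric_of_lt_one hx₀ hx₁).mul_left (x ^ (n + 1) / (n + 1))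
  have hle := hasSum_le (fun i => ?_) htail hgeom
  · rw [abs_of_nonpos (by linarith [htail.nonneg fun i => by positivity])]
    rw [div_mul_eq_div_div, div_eq_mul_inv (x ^ (n + 1) / (n + 1))]
    linarith
  · rw [div_mul_eq_mul_div, div_le_div_iff₀ (by positivity) (by positivity)]
    have : (n : ℝ) + 1 ≤ i + n + 1 := by linarith [(i.cast_nonneg : (0 : ℝ) ≤ i)]
    calc x ^ (i + n + 1) * (n + 1) = x ^ (n + 1) * x ^ i * (n + 1) := by ring
      _ ≤ x ^ (n + 1) * x ^ i * (i + n + 1) := by gcongr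

theorem Matrix.IsHermitian.trace_pow_one_sub_smul {ι 𝕜 : Type*} [Fintype ι] [DecidableEq ι]
    [RCLike 𝕜] {A : Matrix ι ι 𝕜} (hA : A.IsHermitian) (c : ℝ) (k : ℕ) :
    ((1 - c • A) ^ k).trace = ∑ i, ((1 - c * hA.eigenvalues i : ℝ) : 𝕜) ^ k := by
  set φ := Unitary.conjStarAlgAut 𝕜 (Matrix ι ι 𝕜) hA.eigenvectorUnitary
  have hconj : 1 - c • A = φ (diagonal fun i => ((1 - c * hA.eigenvalues i : ℝ) : 𝕜)) := by
    conv_lhs => rw [hA.spectral_theorem]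
    rw [RCLike.real_smul_eq_coe_smul (K := 𝕜), ← map_one φ, ← map_smul, ← map_sub]
    congr 1
    ext i j
    rcases eq_or_ne i j with rfl | hij <;> simp [*]
  rw [hconj, ← map_pow, Unitary.conjStarAlgAut_apply, trace_mul_cycle,
    Unitary.coe_star_mul_self, one_mul, diagonal_pow, trace_diagonal]
  rfl

theorem Matrix.IsHermitian.log_det {ι : Type*} [Fintype ι] [DecidableEq ι] {A : Matrix ι ι ℝ}
    (hA : A.IsHermitian) (h : ∀ i, hA.eigenvalues i ≠ 0) :
    log A.det = ∑ i, log (hA.eigenvalues i) := by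
  rw [hA.det_eq_prod_eigenvalues, log_prod fun i _ => by simpa using h i]
  rfl

theorem abs_sum_Icc_pow_div_add_log_le {ρ₀ ρM r : ℝ} (hρ₀ : 0 < ρ₀) (hr₀ : ρ₀ ≤ r)
    (hrM : r < ρM) {m : ℕ} (hm : 1 ≤ m) :
    |∑ k ∈ Icc 1 (m - 1), (1 - ρM⁻¹ * r) ^ k / k + log (ρM⁻¹ * r)|
      ≤ ρM / ρ₀ * (1 - ρ₀ / ρM) ^ m / m := by
  obtain ⟨n, rfl⟩ : ∃ n, m = n + 1 := ⟨m - 1, by omega⟩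
  have hρM : 0 < ρM := by linarith
  set x := 1 - ρM⁻¹ * r
  have hx₀ : 0 ≤ x := by
    simp only [x, sub_nonneg, inv_mul_le_iff₀ hρM]
    linarith
  have hxq : x ≤ 1 - ρ₀ / ρM := by
    simp only [x, div_eq_inv_mul]
    gcongr
  have hq : 0 < ρ₀ / ρM := by positivity
  have hsum : ∑ k ∈ Icc 1 n, x ^ k / k = ∑ i ∈ range n, x ^ (i + 1) / (i + 1) := by
    rw [← Ico_add_one_right_eq_Icc, sum_Ico_eq_sum_range]
    simp [add_comm]
  rw [add_tsub_cancel_right, hsum, show ρM⁻¹ * r = 1 - x by ring]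
  calc _ ≤ x ^ (n + 1) / ((n + 1) * (1 - x)) :=
        abs_sum_range_pow_div_add_log_one_sub_le hx₀ (by linarith) n
    _ ≤ (1 - ρ₀ / ρM) ^ (n + 1) / ((n + 1) * (ρ₀ / ρM)) := by
        gcongr
        · exact pow_nonneg (hx₀.trans hxq) _
        · linarith
    _ = ρM / ρ₀ * (1 - ρ₀ / ρM) ^ (n + 1) / ↑(n + 1) := by
        push_cast
        field_simp

theorem logdet_partial_sum_error_bound_general
    {n : ℕ} (A : Matrix (Fin n) (Fin n) ℝ) (hA : A.IsHermitian)
    (ρ₀ ρM : ℝ) (hρ₀ : 0 < ρ₀)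
    (heig : ∀ i, ρ₀ ≤ hA.eigenvalues i ∧ hA.eigenvalues i < ρM)
    (m : ℕ) (hm : 1 ≤ m) :
    |(-∑ k ∈ Finset.Icc 1 (m - 1), ((1 - ρM⁻¹ • A) ^ k).trace / (k : ℝ))
        + n * Real.log ρM - Real.log A.det|
      ≤ n * (ρM / ρ₀) * (1 - ρ₀ / ρM) ^ m / m := by
  have hpos i : 0 < hA.eigenvalues i := hρ₀.trans_le (heig i).1
  have hlog i : log (ρM⁻¹ * hA.eigenvalues i) = log (hA.eigenvalues i) - log ρM := by
    rw [log_mul (inv_ne_zero ((hpos i).trans (heig i).2).ne') (hpos i).ne', log_inv]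
    ring
  have key : (-∑ k ∈ Icc 1 (m - 1), ((1 - ρM⁻¹ • A) ^ k).trace / (k : ℝ))
        + n * log ρM - log A.det
      = -∑ i, (∑ k ∈ Icc 1 (m - 1), (1 - ρM⁻¹ * hA.eigenvalues i) ^ k / k
          + log (ρM⁻¹ * hA.eigenvalues i)) := by
    simp only [hA.trace_pow_one_sub_smul, RCLike.ofReal_real_eq_id, id, sum_div,
      hA.log_det fun i => (hpos i).ne', hlog, sum_add_distrib, sum_sub_distrib, sum_const,
      card_univ, Fintype.card_fin, nsmul_eq_mul]
    rw [sum_comm]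
    ring
  rw [key, abs_neg]
  calc _ ≤ ∑ i, |∑ k ∈ Icc 1 (m - 1), (1 - ρM⁻¹ * hA.eigenvalues i) ^ k / k
          + log (ρM⁻¹ * hA.eigenvalues i)| := abs_sum_le_sum_abs _ _
    _ ≤ ∑ _i : Fin n, ρM / ρ₀ * (1 - ρ₀ / ρM) ^ m / m :=
        sum_le_sum fun i _ => abs_sum_Icc_pow_div_add_log_le hρ₀ (heig i).1 (heig i).2 hm
    _ = n * (ρM / ρ₀) * (1 - ρ₀ / ρM) ^ m / m := by
        rw [sum_const, card_univ, Fintype.card_fin, nsmul_eq_mul]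
        ring

/-- Let `A` be a real symmetric `n × n` matrix and `0 < ρ₀ ≤ ρM` with every
eigenvalue `r` of `A` satisfying `ρ₀ ≤ r < ρM`. Then for every `m ≥ 1`,
`| −∑_{k=1}^{m−1} tr((I − ρM⁻¹ • A) ^ k)/k + n log ρM − log det A |
  ≤ n (ρM/ρ₀) (1 − ρ₀/ρM)^m / m`. -/
theorem logdet_partial_sum_error_bound
    {n : ℕ} (A : Matrix (Fin n) (Fin n) ℝ) (hA : A.IsHermitian)
    (ρ₀ ρM : ℝ) (hρ₀ : 0 < ρ₀) (hρ₀M : ρ₀ ≤ ρM)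
    (heig : ∀ i, ρ₀ ≤ hA.eigenvalues i ∧ hA.eigenvalues i < ρM)
    (m : ℕ) (hm : 1 ≤ m) :
    |(-∑ k ∈ Finset.Icc 1 (m - 1), ((1 - ρM⁻¹ • A) ^ k).trace / (k : ℝ))
        + n * Real.log ρM - Real.log A.det|
      ≤ n * (ρM / ρ₀) * (1 - ρ₀ / ρM) ^ m / m :=
  logdet_partial_sum_error_bound_general A hA ρ₀ ρM hρ₀ heig m hm
end

section
/- Under the POD setup, the matrix G is invertible, and for every finite-dimensional real inner product space V, every r ∈ ℝ^N and all vectors v_1, …, v_N ∈ V, ‖Σ_{n=1}^N r_n Σ_{p=1}^N (G⁻¹)_{np} v_p‖_V² ≤ (Σ_{n=1}^N ‖v_n‖_V²) · (Σ_{n=1}^N r_n²/τ_n). -/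
/-!
Orthonormality of the eigenvectors makes `Ξ := (ξ n p)` an orthogonal matrix, and the
eigenvalue equation turns `G` into `Ξᵀ D` with `D = diag (√(N τ n))`. Hence `G⁻¹ = D⁻¹ Ξ`, and
the vector in the norm is `∑ p, a p • v p` with `a = Ξᵀ (D⁻¹ r)`. Cauchy–Schwarz bounds its
squared norm by `(∑ ‖v p‖²) ‖a‖²`, and `‖a‖² = ‖D⁻¹ r‖² = ∑ r n² / (N τ n) ≤ ∑ r n² / τ n`.
-/

open MeasureTheory Bornology Matrix
open scoped RealInnerProductSpace

theorem norm_sum_smul_sq_le {ι E : Type*} [SeminormedAddCommGroup E] [NormedSpace ℝ E]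
    (s : Finset ι) (a : ι → ℝ) (v : ι → E) :
    ‖∑ i ∈ s, a i • v i‖ ^ 2 ≤ (∑ i ∈ s, ‖v i‖ ^ 2) * ∑ i ∈ s, a i ^ 2 := by
  have hnorm : ‖∑ i ∈ s, a i • v i‖ ≤ ∑ i ∈ s, ‖v i‖ * |a i| :=
    (norm_sum_le _ _).trans_eq <| Finset.sum_congr rfl fun i _ => by
      rw [norm_smul, Real.norm_eq_abs, mul_comm]
  calc ‖∑ i ∈ s, a i • v i‖ ^ 2 ≤ (∑ i ∈ s, ‖v i‖ * |a i|) ^ 2 := by gcongr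
    _ ≤ (∑ i ∈ s, ‖v i‖ ^ 2) * ∑ i ∈ s, |a i| ^ 2 := Finset.sum_mul_sq_le_sq_mul_sq _ _ _
    _ = (∑ i ∈ s, ‖v i‖ ^ 2) * ∑ i ∈ s, a i ^ 2 := by simp only [sq_abs]

theorem Finset.sum_smul_sum_smul_eq_sum_vecMul_smul {ι R M : Type*} [Fintype ι] [CommSemiring R]
    [AddCommMonoid M] [Module R M] (r : ι → R) (A : Matrix ι ι R) (v : ι → M) :
    ∑ n, r n • ∑ p, A n p • v p = ∑ p, (r ᵥ* A) p • v p := by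
  simp only [vecMul, dotProduct, Finset.smul_sum, smul_smul, Finset.sum_smul]
  exact Finset.sum_comm

namespace Matrix

variable {ι : Type*} [Fintype ι] [DecidableEq ι]

theorem sum_vecMul_sq_of_mul_transpose_eq_one {Ξ : Matrix ι ι ℝ} (hΞ : Ξ * Ξᵀ = 1)
    (c : ι → ℝ) : ∑ p, (c ᵥ* Ξ) p ^ 2 = ∑ n, c n ^ 2 := by
  have hdot : ∀ w : ι → ℝ, w ⬝ᵥ w = ∑ i, w i ^ 2 := fun w => by
    simp only [dotProduct, sq]
  rw [← hdot, ← hdot, ← mulVec_transpose, dotProduct_mulVec, vecMul_transpose, mulVec_mulVec, hΞ,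
    one_mulVec]

theorem transpose_mul_diagonal_mul_eq_one {Ξ : Matrix ι ι ℝ} (hΞ : Ξ * Ξᵀ = 1) {d : ι → ℝ}
    (hd : ∀ i, d i ≠ 0) : (diagonal d⁻¹ * Ξ) * (Ξᵀ * diagonal d) = 1 := by
  rw [Matrix.mul_assoc, ← Matrix.mul_assoc Ξ, hΞ, Matrix.one_mul, diagonal_mul_diagonal,
    ← diagonal_one]
  exact congrArg diagonal (funext fun i => inv_mul_cancel₀ (hd i))

end Matrix

theorem pod_G_eq_transpose_mul_diagonal {E : Type*} [NormedAddCommGroup E] [InnerProductSpace ℝ E]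
    {N : ℕ} (g : Fin N → E) (τ : Fin N → ℝ) (ξ : Fin N → Fin N → ℝ)
    (heig : ∀ n p, τ n * ξ n p = (1 / (N : ℝ)) * ∑ q', ⟪g p, g q'⟫ * ξ n q')
    (Φ : Fin N → E) (hΦ : ∀ n, Φ n = (Real.sqrt (N * τ n))⁻¹ • ∑ p, ξ n p • g p)
    (G : Matrix (Fin N) (Fin N) ℝ) (hG : ∀ n p, G n p = ⟪g n, Φ p⟫) :
    G = (of ξ)ᵀ * diagonal fun n => Real.sqrt (N * τ n) := by
  ext n p
  have hN : (N : ℝ) ≠ 0 := by exact_mod_cast n.pos.ne'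
  have hC : ∑ q', ξ p q' * ⟪g n, g q'⟫ = N * τ p * ξ p n := by
    rw [mul_assoc, heig, ← mul_assoc, mul_one_div_cancel hN, one_mul]
    exact Finset.sum_congr rfl fun _ _ => mul_comm _ _
  rw [hG, hΦ, inner_smul_right, inner_sum]
  simp only [inner_smul_right, hC, mul_diagonal, transpose_apply, of_apply]
  rw [← mul_assoc, inv_mul_eq_div, Real.div_sqrt, mul_comm]

theorem pod_Ginv_bound_general
    (N q : ℕ) (K : Set (EuclideanSpace ℝ (Fin q)))
    (g : Fin N → Lp ℝ 2 (volume.restrict K))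
    (τ : Fin N → ℝ) (ξ : Fin N → Fin N → ℝ)
    (hτpos : ∀ n, 0 < τ n)
    (heig : ∀ n p, τ n * ξ n p = (1 / (N : ℝ)) * ∑ q', ⟪g p, g q'⟫ * ξ n q')
    (horth : ∀ n m, ∑ p, ξ n p * ξ m p = if n = m then (1 : ℝ) else 0)
    (Φ : Fin N → Lp ℝ 2 (volume.restrict K))
    (hΦ : ∀ n, Φ n = (Real.sqrt (N * τ n))⁻¹ • ∑ p, ξ n p • g p)
    (G : Matrix (Fin N) (Fin N) ℝ)
    (hG : ∀ n p, G n p = ⟪g n, Φ p⟫) :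
    IsUnit G ∧
      ∀ (V : Type) [NormedAddCommGroup V] [InnerProductSpace ℝ V]
        [FiniteDimensional ℝ V] (r : Fin N → ℝ) (v : Fin N → V),
        ‖∑ n, r n • ∑ p, G⁻¹ n p • v p‖ ^ 2 ≤
          (∑ n, ‖v n‖ ^ 2) * (∑ n, r n ^ 2 / τ n) := by
  set d : Fin N → ℝ := fun n => Real.sqrt (N * τ n)
  have hNτ : ∀ n : Fin N, 0 < (N : ℝ) * τ n := fun n =>
    mul_pos (by exact_mod_cast n.pos) (hτpos n)
  have hΞ : of ξ * (of ξ)ᵀ = 1 := by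
    ext n m
    simpa [mul_apply, one_apply] using horth n m
  have hinv := transpose_mul_diagonal_mul_eq_one hΞ (d := d) fun n => (Real.sqrt_pos.2 (hNτ n)).ne'
  rw [← pod_G_eq_transpose_mul_diagonal g τ ξ heig Φ hΦ G hG] at hinv
  refine ⟨(isUnit_iff_isUnit_det G).2 (isUnit_det_of_left_inverse hinv), fun V _ _ _ r v => ?_⟩
  have hcoeff : ∀ n, (r n * (d n)⁻¹) ^ 2 ≤ r n ^ 2 / τ n := fun n => by
    rw [mul_pow, inv_pow, Real.sq_sqrt (hNτ n).le, ← div_eq_mul_inv]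
    exact div_le_div_of_nonneg_left (sq_nonneg _) (hτpos n)
      (le_mul_of_one_le_left (hτpos n).le (by exact_mod_cast n.pos))
  rw [Finset.sum_smul_sum_smul_eq_sum_vecMul_smul, inv_eq_left_inv hinv, ← vecMul_vecMul]
  calc _ ≤ (∑ n, ‖v n‖ ^ 2) * ∑ p, ((r ᵥ* diagonal d⁻¹) ᵥ* of ξ) p ^ 2 := norm_sum_smul_sq_le _ _ _
    _ = (∑ n, ‖v n‖ ^ 2) * ∑ n, (r n * (d n)⁻¹) ^ 2 := by
      simp only [sum_vecMul_sq_of_mul_transpose_eq_one hΞ, vecMul_diagonal, Pi.inv_apply]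
    _ ≤ (∑ n, ‖v n‖ ^ 2) * (∑ n, r n ^ 2 / τ n) := by gcongr with n; exact hcoeff n

/-- POD setup: `U = L²(K; ℝ)` for a bounded measurable subset `K` of a
Euclidean space; `g 1, …, g N ∈ U` linearly independent; `C p q = ⟪g p, g q⟫`;
`τ 1 ≥ ⋯ ≥ τ N > 0` and orthonormal `ξ` the eigenvalues/eigenvectors of `(1/N) C`;
`Φ n = (1/√(N τ n)) ∑ p, ξ n p • g p`; `G n p = ⟪g n, Φ p⟫`. Then `G` is invertible, and for
every finite-dimensional real inner product space `V`, every `r ∈ ℝ^N` and all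
`v 1, …, v N ∈ V`,
`‖∑ n, r n • ∑ p, (G⁻¹) n p • v p‖² ≤ (∑ n, ‖v n‖²) * (∑ n, (r n)² / τ n)`. -/
theorem pod_Ginv_bound
    (N q : ℕ) (K : Set (EuclideanSpace ℝ (Fin q)))
    (hKb : IsBounded K) (hKm : MeasurableSet K)
    (g : Fin N → Lp ℝ 2 (volume.restrict K))
    (hg : LinearIndependent ℝ g)
    (τ : Fin N → ℝ) (ξ : Fin N → Fin N → ℝ)
    (hτmono : ∀ i j : Fin N, i ≤ j → τ j ≤ τ i)
    (hτpos : ∀ n, 0 < τ n)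
    (heig : ∀ n p, τ n * ξ n p = (1 / (N : ℝ)) * ∑ q', ⟪g p, g q'⟫ * ξ n q')
    (horth : ∀ n m, ∑ p, ξ n p * ξ m p = if n = m then (1 : ℝ) else 0)
    (Φ : Fin N → Lp ℝ 2 (volume.restrict K))
    (hΦ : ∀ n, Φ n = (Real.sqrt (N * τ n))⁻¹ • ∑ p, ξ n p • g p)
    (G : Matrix (Fin N) (Fin N) ℝ)
    (hG : ∀ n p, G n p = ⟪g n, Φ p⟫) :
    IsUnit G ∧
      ∀ (V : Type) [NormedAddCommGroup V] [InnerProductSpace ℝ V]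
        [FiniteDimensional ℝ V] (r : Fin N → ℝ) (v : Fin N → V),
        ‖∑ n, r n • ∑ p, G⁻¹ n p • v p‖ ^ 2 ≤
          (∑ n, ‖v n‖ ^ 2) * (∑ n, r n ^ 2 / τ n) :=
  pod_Ginv_bound_general N q K g τ ξ hτpos heig horth Φ hΦ G hG
end

section
/- In the approximation setting, assume additionally that X_m : U → V is a continuous linear map and C₁ ≥ 0 is such that ‖X_m g_μ − L_μ‖_V ≤ C₁ for every μ ∈ P. Then (1/|P|) ∫_P ‖X^N_μ − L_μ‖_V² dμ ≤ 3 C₁² (1 + 2 N² Z_N + 8 N δ_N² / (|P| τ_N)) + (3/|P|) ∫_P ‖X_m(I^N g_μ − g_μ)‖_V² dμ. -/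
/-!
Split `X^N_μ - L_μ = ∑ λ_n (L_{μ_n} - X_m g_{μ_n}) + X_m (I^N g_μ - g_μ) + (X_m g_μ - L_μ)`.
The outer terms are controlled by `C₁`, the first one through `C₁² N ∑ λ_n(μ)²`. The POD basis
turns the coefficients into projections: since `⟪∑ a_p g_{μ_p}, Φ_n⟫ = √(N τ_n) (ξ a)_n` with `ξ`
orthogonal, `N ∑ λ_n(μ)² = ∑ ⟪I^N g_μ, Φ_n⟫² / τ_n`. Writing `I^N g_μ = g_μ + (I^N g_μ - g_μ)` and
applying Bessel's inequality to the second part gives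
`N ∑ λ_n(μ)² ≤ 2 ∑ ⟪g_μ, Φ_n⟫² / τ_n + 2 ‖I^N g_μ - g_μ‖² / τ_N`, and after integration over `P`
the first sum is `N |P| Z_N`.
-/

open MeasureTheory Bornology
open scoped RealInnerProductSpace

open Finset Matrix

lemma Matrix.dotProduct_mulVec_self_of_transpose_mul_self {ι R : Type*} [Fintype ι]
    [DecidableEq ι] [CommRing R] {A : Matrix ι ι R} (hA : Aᵀ * A = 1) (a : ι → R) :
    (A *ᵥ a) ⬝ᵥ (A *ᵥ a) = a ⬝ᵥ a := by
  rw [dotProduct_mulVec, ← mulVec_transpose, mulVec_mulVec, hA, one_mulVec]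

section PODModes

variable {ι E : Type*} [Fintype ι] [NormedAddCommGroup E] [InnerProductSpace ℝ E]

/-- With `σ = N τ` this is the paper's `Φ_n`: here `σ` are the eigenvalues of the Gram matrix
itself rather than of `(1/N) C`. -/
noncomputable def podMode (v : ι → E) (σ : ι → ℝ) (ξ : Matrix ι ι ℝ) (n : ι) : E :=
  (√(σ n))⁻¹ • ∑ p, ξ n p • v p

variable {v : ι → E} {σ : ι → ℝ} {ξ : Matrix ι ι ℝ}

lemma inner_podMode (hξ : ∀ n, gram ℝ v *ᵥ ξ n = σ n • ξ n) (p n : ι) :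
    ⟪v p, podMode v σ ξ n⟫ = √(σ n) * ξ n p := by
  have hp := congrFun (hξ n) p
  simp only [mulVec, dotProduct, gram_apply, Pi.smul_apply, smul_eq_mul] at hp
  simp_rw [podMode, real_inner_smul_right, inner_sum, real_inner_smul_right, mul_comm (ξ n _)]
  rw [hp, ← mul_assoc, inv_mul_eq_div, Real.div_sqrt]

lemma inner_sum_smul_podMode (hξ : ∀ n, gram ℝ v *ᵥ ξ n = σ n • ξ n) (a : ι → ℝ) (n : ι) :
    ⟪∑ p, a p • v p, podMode v σ ξ n⟫ = √(σ n) * (ξ *ᵥ a) n := by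
  simp_rw [sum_inner, real_inner_smul_left, inner_podMode hξ, mulVec, dotProduct, mul_sum]
  exact sum_congr rfl fun _ _ => by ring

variable [DecidableEq ι]

lemma orthonormal_podMode (hσ : ∀ n, 0 < σ n) (hξ : ∀ n, gram ℝ v *ᵥ ξ n = σ n • ξ n)
    (horth : ξ * ξᵀ = 1) : Orthonormal ℝ (podMode v σ ξ) := by
  rw [orthonormal_iff_ite]
  intro n m
  have hmn : (ξ *ᵥ ξ n) m = if n = m then 1 else 0 := by
    simpa [mulVec, dotProduct, mul_apply, one_apply, eq_comm, mul_comm] using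
      congrFun (congrFun horth m) n
  rw [podMode, real_inner_smul_left, inner_sum_smul_podMode hξ, hmn]
  split_ifs with h
  · subst h
    rw [mul_one, inv_mul_cancel₀ (Real.sqrt_pos.2 (hσ n)).ne']
  · rw [mul_zero, mul_zero]

lemma sum_sq_inner_podMode (hξ : ∀ n, gram ℝ v *ᵥ ξ n = σ n • ξ n)
    (horth : ξ * ξᵀ = 1) {n : ι} (hσ : 0 ≤ σ n) : ∑ p, ⟪v p, podMode v σ ξ n⟫ ^ 2 = σ n := by
  have hnn : ∑ p, ξ n p ^ 2 = 1 := by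
    simpa [mul_apply, sq] using congrFun (congrFun horth n) n
  simp_rw [inner_podMode hξ, mul_pow]
  rw [← mul_sum, hnn, Real.sq_sqrt hσ, mul_one]

lemma sum_sq_eq_sum_sq_inner_podMode_div (hσ : ∀ n, 0 < σ n)
    (hξ : ∀ n, gram ℝ v *ᵥ ξ n = σ n • ξ n) (horth : ξ * ξᵀ = 1) (a : ι → ℝ) :
    ∑ p, a p ^ 2 = ∑ n, ⟪∑ p, a p • v p, podMode v σ ξ n⟫ ^ 2 / σ n := by
  have hcol : ξᵀ * ξ = 1 := mul_eq_one_comm.1 horth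
  have key := dotProduct_mulVec_self_of_transpose_mul_self hcol a
  simp only [dotProduct, ← sq] at key
  rw [← key]
  refine sum_congr rfl fun n _ => ?_
  rw [inner_sum_smul_podMode hξ, mul_pow, Real.sq_sqrt (hσ n).le,
    mul_div_cancel_left₀ _ (hσ n).ne']

end PODModes

lemma Orthonormal.sum_sq_inner_div_le {ι E : Type*} [Fintype ι] [NormedAddCommGroup E]
    [InnerProductSpace ℝ E] {Φ : ι → E} (hΦ : Orthonormal ℝ Φ) {σ : ι → ℝ} {s : ℝ}
    (hs : 0 < s) (hsσ : ∀ n, s ≤ σ n) (x y : E) :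
    ∑ n, ⟪y, Φ n⟫ ^ 2 / σ n ≤ 2 * ∑ n, ⟪x, Φ n⟫ ^ 2 / σ n + 2 * (‖y - x‖ ^ 2 / s) := by
  have hterm n : ⟪y, Φ n⟫ ^ 2 / σ n ≤ 2 * (⟪x, Φ n⟫ ^ 2 / σ n) + 2 * (⟪y - x, Φ n⟫ ^ 2 / s) := by
    have hσn : 0 < σ n := hs.trans_le (hsσ n)
    have hsplit : ⟪y, Φ n⟫ = ⟪x, Φ n⟫ + ⟪y - x, Φ n⟫ := by
      rw [← inner_add_left, add_sub_cancel]
    calc ⟪y, Φ n⟫ ^ 2 / σ n ≤ (2 * ⟪x, Φ n⟫ ^ 2 + 2 * ⟪y - x, Φ n⟫ ^ 2) / σ n := by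
          rw [hsplit]; gcongr; nlinarith [sq_nonneg (⟪x, Φ n⟫ - ⟪y - x, Φ n⟫)]
      _ ≤ 2 * (⟪x, Φ n⟫ ^ 2 / σ n) + 2 * (⟪y - x, Φ n⟫ ^ 2 / s) := by
          rw [add_div, mul_div_assoc, mul_div_assoc]; gcongr; exact hsσ n
  have hbessel : ∑ n, ⟪y - x, Φ n⟫ ^ 2 ≤ ‖y - x‖ ^ 2 := by
    simpa [real_inner_comm] using hΦ.sum_inner_products_le (s := univ) (y - x)
  calc ∑ n, ⟪y, Φ n⟫ ^ 2 / σ n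
      ≤ ∑ n, (2 * (⟪x, Φ n⟫ ^ 2 / σ n) + 2 * (⟪y - x, Φ n⟫ ^ 2 / s)) :=
        sum_le_sum fun n _ => hterm n
    _ = 2 * ∑ n, ⟪x, Φ n⟫ ^ 2 / σ n + 2 * ((∑ n, ⟪y - x, Φ n⟫ ^ 2) / s) := by
      rw [sum_add_distrib, ← mul_sum, ← mul_sum, sum_div]
    _ ≤ 2 * ∑ n, ⟪x, Φ n⟫ ^ 2 / σ n + 2 * (‖y - x‖ ^ 2 / s) := by gcongr

lemma norm_add₃_sq_le {E : Type*} [SeminormedAddCommGroup E] (a b c : E) :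
    ‖a + b + c‖ ^ 2 ≤ 3 * (‖a‖ ^ 2 + ‖b‖ ^ 2 + ‖c‖ ^ 2) := by
  calc ‖a + b + c‖ ^ 2 ≤ (‖a‖ + ‖b‖ + ‖c‖) ^ 2 := by gcongr; exact norm_add₃_le
    _ ≤ 3 * (‖a‖ ^ 2 + ‖b‖ ^ 2 + ‖c‖ ^ 2) := by
      nlinarith [sq_nonneg (‖a‖ - ‖b‖), sq_nonneg (‖b‖ - ‖c‖), sq_nonneg (‖a‖ - ‖c‖)]

section

variable {V : Type*} [SeminormedAddCommGroup V] [NormedSpace ℝ V]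

lemma norm_sum_smul_sq_le_s17 {ι : Type*} [Fintype ι] (a : ι → ℝ) {w : ι → V} {C : ℝ}
    (hw : ∀ i, ‖w i‖ ≤ C) : ‖∑ i, a i • w i‖ ^ 2 ≤ C ^ 2 * (Fintype.card ι * ∑ i, a i ^ 2) := by
  have hsum : ‖∑ i, a i • w i‖ ≤ C * ∑ i, |a i| := by
    calc ‖∑ i, a i • w i‖ ≤ ∑ i, |a i| * ‖w i‖ := by
          simpa only [norm_smul, Real.norm_eq_abs] using norm_sum_le univ fun i => a i • w i
      _ ≤ ∑ i, |a i| * C := by gcongr with i; exact hw i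
      _ = C * ∑ i, |a i| := by rw [← sum_mul, mul_comm]
  have hcs : (∑ i, |a i|) ^ 2 ≤ Fintype.card ι * ∑ i, a i ^ 2 := by
    simpa only [sq_abs, card_univ] using sq_sum_le_card_mul_sum_sq (s := univ) (f := fun i => |a i|)
  calc ‖∑ i, a i • w i‖ ^ 2 ≤ (C * ∑ i, |a i|) ^ 2 := by gcongr
    _ = C ^ 2 * (∑ i, |a i|) ^ 2 := mul_pow _ _ _
    _ ≤ C ^ 2 * (Fintype.card ι * ∑ i, a i ^ 2) := by gcongr

lemma norm_sum_smul_sub_sq_le {ι U F : Type*} [Fintype ι] [SeminormedAddCommGroup U]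
    [NormedSpace ℝ U] [FunLike F U V] [LinearMapClass F ℝ U V] (X : F) (a : ι → ℝ)
    {u : ι → U} {ℓ : ι → V} {x : U} {y : V} {C : ℝ} (hu : ∀ i, ‖X (u i) - ℓ i‖ ≤ C)
    (hx : ‖X x - y‖ ≤ C) :
    ‖∑ i, a i • ℓ i - y‖ ^ 2 ≤
      3 * (C ^ 2 * (Fintype.card ι * ∑ i, a i ^ 2) + ‖X (∑ i, a i • u i - x)‖ ^ 2 + C ^ 2) := by
  have hdecomp : ∑ i, a i • ℓ i - y =
      ∑ i, a i • (ℓ i - X (u i)) + X (∑ i, a i • u i - x) + (X x - y) := by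
    simp only [map_sub, map_sum, map_smul, smul_sub, sum_sub_distrib]
    abel
  rw [hdecomp]
  refine (norm_add₃_sq_le _ _ _).trans ?_
  gcongr
  exact norm_sum_smul_sq_le_s17 a fun i => norm_sub_rev (ℓ i) _ ▸ hu i

end

lemma sum_sq_le_of_podMode {ι E : Type*} [Fintype ι] [DecidableEq ι] [NormedAddCommGroup E]
    [InnerProductSpace ℝ E] {v : ι → E} {σ : ι → ℝ} {ξ : Matrix ι ι ℝ} {s : ℝ} (hs : 0 < s)
    (hsσ : ∀ n, s ≤ σ n) (hξ : ∀ n, gram ℝ v *ᵥ ξ n = σ n • ξ n) (horth : ξ * ξᵀ = 1)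
    (a : ι → ℝ) (x : E) :
    ∑ p, a p ^ 2 ≤
      2 * ∑ n, ⟪x, podMode v σ ξ n⟫ ^ 2 / σ n + 2 * (‖∑ p, a p • v p - x‖ ^ 2 / s) := by
  have hσ n : 0 < σ n := hs.trans_le (hsσ n)
  rw [sum_sq_eq_sum_sq_inner_podMode_div hσ hξ horth]
  exact (orthonormal_podMode hσ hξ horth).sum_sq_inner_div_le hs hsσ x _

lemma setIntegral_norm_sum_smul_sub_sq_le {α ι E V : Type*} [Fintype ι] [DecidableEq ι]
    [MeasurableSpace α] [TopologicalSpace α] [OpensMeasurableSpace α] [T2Space α]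
    {ν : Measure α} [IsFiniteMeasureOnCompacts ν] [NormedAddCommGroup E] [InnerProductSpace ℝ E]
    [NormedAddCommGroup V] [NormedSpace ℝ V] {P : Set α} (hP : IsCompact P) {g : α → E}
    (hg : ContinuousOn g P) {L : α → V} (hL : ContinuousOn L P) {lam : α → ι → ℝ}
    (hlam : ∀ p, ContinuousOn (fun μ => lam μ p) P) {v : ι → E} {ℓ : ι → V} {σ : ι → ℝ}
    {ξ : Matrix ι ι ℝ} {s : ℝ} (hs : 0 < s) (hsσ : ∀ n, s ≤ σ n)
    (hξ : ∀ n, gram ℝ v *ᵥ ξ n = σ n • ξ n) (horth : ξ * ξᵀ = 1) (X : E →L[ℝ] V) {C : ℝ}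
    (hv : ∀ p, ‖X (v p) - ℓ p‖ ≤ C) (hgL : ∀ μ ∈ P, ‖X (g μ) - L μ‖ ≤ C) :
    ∫ μ in P, ‖∑ p, lam μ p • ℓ p - L μ‖ ^ 2 ∂ν ≤
      3 * (C ^ 2 * (Fintype.card ι * (2 * ∑ n, (∫ μ in P, ⟪g μ, podMode v σ ξ n⟫ ^ 2 ∂ν) / σ n +
          2 * ((∫ μ in P, ‖∑ p, lam μ p • v p - g μ‖ ^ 2 ∂ν) / s))) +
        (∫ μ in P, ‖X (∑ p, lam μ p • v p - g μ)‖ ^ 2 ∂ν) + C ^ 2 * ν.real P) := by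
  have hIon {f : α → ℝ} (hf : ContinuousOn f P) : IntegrableOn f P ν :=
    hf.integrableOn_compact hP
  have hS : ContinuousOn (fun μ => ∑ n, ⟪g μ, podMode v σ ξ n⟫ ^ 2 / σ n) P := by fun_prop
  have hpoint : ∀ μ ∈ P, ‖∑ p, lam μ p • ℓ p - L μ‖ ^ 2 ≤
      3 * (C ^ 2 * (Fintype.card ι * (2 * ∑ n, ⟪g μ, podMode v σ ξ n⟫ ^ 2 / σ n +
          2 * (‖∑ p, lam μ p • v p - g μ‖ ^ 2 / s))) +
        ‖X (∑ p, lam μ p • v p - g μ)‖ ^ 2 + C ^ 2) := by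
    intro μ hμ
    refine (norm_sum_smul_sub_sq_le X (lam μ) hv (hgL μ hμ)).trans ?_
    gcongr
    exact sum_sq_le_of_podMode hs hsσ hξ horth (lam μ) (g μ)
  refine (setIntegral_mono_on (hIon (by fun_prop)) (hIon (by fun_prop)) hP.measurableSet
    hpoint).trans_eq ?_
  rw [integral_const_mul, integral_add (hIon (by fun_prop)) (hIon continuousOn_const),
    integral_add (hIon (by fun_prop)) (hIon (by fun_prop)), integral_const_mul,
    integral_const_mul, integral_add ((hIon hS).const_mul 2) (hIon (by fun_prop)),
    integral_const_mul, integral_const_mul,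
    integral_finsetSum _ fun n _ => hIon (by fun_prop), integral_div, setIntegral_const]
  simp_rw [integral_div, smul_eq_mul, mul_comm (ν.real P)]

/-- (Proposition 2 of the paper.) In the approximation setting, if moreover
`X_m : U → V` is a continuous linear map and `C₁ ≥ 0` satisfies `‖X_m g_μ − L_μ‖ ≤ C₁` for
every `μ ∈ P`, then
`(1/|P|) ∫_P ‖X^N_μ − L_μ‖² dμ ≤ 3 C₁² (1 + 2 N² Z_N + 8 N δ_N²/(|P| τ_N))
  + (3/|P|) ∫_P ‖X_m (I^N g_μ − g_μ)‖² dμ`. -/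
theorem approximation_error_bound_power_algorithm
    (r N q : ℕ) (hN : 0 < N)
    (K : Set (EuclideanSpace ℝ (Fin q)))
    (P : Set (EuclideanSpace ℝ (Fin r))) (hP : IsCompact P)
    (hPpos : 0 < (volume P).toReal)
    (g : EuclideanSpace ℝ (Fin r) → Lp ℝ 2 (volume.restrict K))
    (hg : ContinuousOn g P)
    (μs : Fin N → EuclideanSpace ℝ (Fin r)) (hμs : ∀ n, μs n ∈ P)
    (lam : EuclideanSpace ℝ (Fin r) → Fin N → ℝ)
    (hlam : ∀ n, ContinuousOn (fun μ => lam μ n) P)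
    (δsq : ℝ)
    (hδsq : δsq = ∫ μ in P, ‖(∑ n, lam μ n • g (μs n)) - g μ‖ ^ 2)
    (τ : Fin N → ℝ) (ξ : Fin N → Fin N → ℝ)
    (hτmono : ∀ i j : Fin N, i ≤ j → τ j ≤ τ i)
    (hτpos : ∀ n, 0 < τ n)
    (heig : ∀ n p, τ n * ξ n p =
        (1 / (N : ℝ)) * ∑ q', ⟪g (μs p), g (μs q')⟫ * ξ n q')
    (horth : ∀ n m, ∑ p, ξ n p * ξ m p = if n = m then (1 : ℝ) else 0)
    (Φ : Fin N → Lp ℝ 2 (volume.restrict K))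
    (hΦ : ∀ n, Φ n = (Real.sqrt (N * τ n))⁻¹ • ∑ p, ξ n p • g (μs p))
    (Z : ℝ)
    (hZ : Z = (1 / (N : ℝ)) * ∑ n,
        (∫ μ in P, ⟪g μ, Φ n⟫ ^ 2) /
          (((volume P).toReal / N) * ∑ p, ⟪g (μs p), Φ n⟫ ^ 2))
    (V : Type) [NormedAddCommGroup V] [InnerProductSpace ℝ V]
    (L : EuclideanSpace ℝ (Fin r) → V) (hL : ContinuousOn L P)
    (Xm : Lp ℝ 2 (volume.restrict K) →L[ℝ] V)
    (C₁ : ℝ)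
    (hXmL : ∀ μ ∈ P, ‖Xm (g μ) - L μ‖ ≤ C₁) :
    (1 / (volume P).toReal) * ∫ μ in P, ‖(∑ n, lam μ n • L (μs n)) - L μ‖ ^ 2 ≤
      3 * C₁ ^ 2 *
          (1 + 2 * (N : ℝ) ^ 2 * Z +
            8 * (N : ℝ) * δsq / ((volume P).toReal * τ ⟨N - 1, by omega⟩)) +
        (3 / (volume P).toReal) *
          ∫ μ in P, ‖Xm ((∑ n, lam μ n • g (μs n)) - g μ)‖ ^ 2 := by
  let v : Fin N → Lp ℝ 2 (volume.restrict K) := fun p => g (μs p)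
  let σ : Fin N → ℝ := fun n => N * τ n
  set last : Fin N := ⟨N - 1, by omega⟩
  have hN1 : (1 : ℝ) ≤ N := by exact_mod_cast hN
  have hσ n : 0 < σ n := mul_pos (by positivity) (hτpos n)
  have hlast n : σ last ≤ σ n :=
    mul_le_mul_of_nonneg_left (hτmono _ _ (Nat.le_sub_one_of_lt n.isLt)) (by positivity)
  have hΦv : Φ = podMode v σ ξ := funext hΦ
  have hgram n : gram ℝ v *ᵥ ξ n = σ n • ξ n := funext fun p => by
    simp only [mulVec, dotProduct, gram_apply, Pi.smul_apply, smul_eq_mul, σ, v, mul_assoc,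
      heig, one_div, mul_inv_cancel_left₀ (by positivity : (N : ℝ) ≠ 0)]
  have hξ : Matrix.of ξ * (Matrix.of ξ)ᵀ = 1 := by
    ext n m; simp [mul_apply, one_apply, horth]
  have hint := setIntegral_norm_sum_smul_sub_sq_le (ν := volume) hP hg hL hlam (hσ last) hlast
    hgram hξ Xm (fun p => hXmL _ (hμs p)) hXmL
  rw [Fintype.card_fin, ← hΦv, ← hδsq] at hint
  have hZ' : (volume P).toReal * Z = ∑ n, (∫ μ in P, ⟪g μ, Φ n⟫ ^ 2) / σ n := by
    have hcol n : ∑ p, ⟪g (μs p), Φ n⟫ ^ 2 = σ n :=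
      hΦv ▸ sum_sq_inner_podMode hgram hξ (hσ n).le
    simp_rw [hZ, hcol, mul_sum]
    exact sum_congr rfl fun n _ => by field_simp
  have hZnn : 0 ≤ Z := by
    refine nonneg_of_mul_nonneg_right ?_ hPpos
    rw [hZ']
    exact sum_nonneg fun n _ => div_nonneg (integral_nonneg fun _ => sq_nonneg _) (hσ n).le
  have hδnn : 0 ≤ δsq := hδsq ▸ integral_nonneg fun _ => sq_nonneg _
  rw [← hZ'] at hint
  calc (1 / (volume P).toReal) * ∫ μ in P, ‖∑ n, lam μ n • L (μs n) - L μ‖ ^ 2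
      ≤ (1 / (volume P).toReal) * (3 * (C₁ ^ 2 * (N * (2 * ((volume P).toReal * Z) +
        2 * (δsq / σ last))) + (∫ μ in P, ‖Xm (∑ n, lam μ n • g (μs n) - g μ)‖ ^ 2) +
          C₁ ^ 2 * (volume P).toReal)) := mul_le_mul_of_nonneg_left hint (by positivity)
    _ = 3 * C₁ ^ 2 * (1 + 2 * N * Z + 2 * δsq / ((volume P).toReal * τ last)) +
        3 / (volume P).toReal * ∫ μ in P, ‖Xm (∑ n, lam μ n • g (μs n) - g μ)‖ ^ 2 := by
      simp only [σ]
      field_simp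
      ring
    -- the stated constants `2 N²` and `8 N` are looser than the `2 N` and `2` obtained
    _ ≤ _ := by
      gcongr
      · exact le_self_pow₀ hN1 two_ne_zero
      · exact (mul_pos hPpos (hτpos last)).le
      · linarith
end

section
/- (Corollary, inverse-matrix case.) In the approximation setting with V := ℝ^{N̂×N̂} equipped with the Frobenius inner product and L_μ := A_μ⁻¹, assume: A_μ := Σ_{l=1}^d α_l(μ) A_l is invertible for every μ ∈ P, where α_1, …, α_d : P → ℝ are continuous and A_1, …, A_d are real N̂×N̂ matrices; Ψ₀ is an invertible real N̂×N̂ matrix and ρ ∈ [0,1) satisfies ‖I − Ψ₀⁻¹A_μ‖₂ ≤ ρ for every μ ∈ P; X₀ is a real N̂×N̂ matrix and ε₀ ≥ 0 satisfies ‖X₀ − A_μ⁻¹‖_F ≤ ε₀ for every μ ∈ P; there is a continuous linear map X_m : U → V with X_m g_μ = (I − Ψ₀⁻¹A_μ)^m X₀ + (Σ_{k=0}^{m−1} (I − Ψ₀⁻¹A_μ)^k) Ψ₀⁻¹ for every μ ∈ P; and the interpolation is exact: g_μ = Σ_{n=1}^N λ_n(μ) g_{μ_n} in U for every μ ∈ P.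 Then (1/|P|) ∫_P ‖Σ_{n=1}^N λ_n(μ) A_{μ_n}⁻¹ − A_μ⁻¹‖_F² dμ ≤ 3 ε₀² ρ^{2m} (1 + 2 N² Z_N). -/
/-!
With `A_μ = ∑ α_l(μ) A_l` and `B_μ = I − Ψ₀⁻¹ A_μ` we have `Ψ₀⁻¹ = (I − B_μ) A_μ⁻¹`, so the
geometric sum telescopes and `X_m g_μ − A_μ⁻¹ = B_μ^m (X₀ − A_μ⁻¹)`. Since
`‖B M‖_F ≤ ‖B‖₂ ‖M‖_F`, this error has Frobenius norm at most `ε := ρ^m ε₀` on `P`.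

By linearity of `X_m` and exact interpolation, the interpolation error splits as
`∑ λ_n (A_{μ_n}⁻¹ − X_m g_{μ_n}) + (X_m g_μ − A_μ⁻¹)`, whose squared norm is at most
`2 ε² (1 + N ∑ λ_n(μ)²)` by Cauchy–Schwarz.

The eigenvector equation gives `⟨g_{μ_p}, Φ_n⟩ = √(N τ_n) ξ_{n,p}`, so the orthogonality of `ξ`
turns `Z_N` into the mean of `∑ λ_n(μ)²` over `P`. Averaging yields `2 ε² (1 + N Z_N)`, which is
at most `3 ε² (1 + 2 N² Z_N)`.
-/

open MeasureTheory Bornology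
open scoped RealInnerProductSpace

/-- The matrix operator norm induced by the Euclidean vector norm. -/
noncomputable def l2OpNorm {n : ℕ} (A : Matrix (Fin n) (Fin n) ℝ) : ℝ :=
  ‖(Matrix.toEuclideanCLM (𝕜 := ℝ) A :
      EuclideanSpace ℝ (Fin n) →L[ℝ] EuclideanSpace ℝ (Fin n))‖

/-- The Frobenius norm of a real matrix. -/
noncomputable def frobNorm {n : ℕ} (A : Matrix (Fin n) (Fin n) ℝ) : ℝ :=
  Real.sqrt (∑ i, ∑ j, A i j ^ 2)

open Finset Matrix

theorem pow_mul_add_geom_sum_mul_sub_eq {R : Type*} [Ring R] {a a' p : R} (h : a * a' = 1)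
    (x : R) (m : ℕ) :
    (1 - p * a) ^ m * x + (∑ k ∈ range m, (1 - p * a) ^ k) * p - a' =
      (1 - p * a) ^ m * (x - a') := by
  have hgeom : (∑ k ∈ range m, (1 - p * a) ^ k) * p = (1 - (1 - p * a) ^ m) * a' := by
    rw [← geom_sum_mul_neg, sub_sub_cancel, mul_assoc, mul_assoc, h, mul_one]
  rw [hgeom]
  noncomm_ring

theorem sum_sq_sum_mul_eq_sum_sq {ι : Type*} [Fintype ι] [DecidableEq ι] {ξ : ι → ι → ℝ}
    (horth : ∀ i j, ∑ k, ξ i k * ξ j k = if i = j then 1 else 0) (v : ι → ℝ) :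
    ∑ i, (∑ k, ξ i k * v k) ^ 2 = ∑ k, v k ^ 2 := by
  have hrows : of ξ * (of ξ)ᵀ = 1 := by
    ext i j; simpa [mul_apply, one_apply] using horth i j
  have hcols : (of ξ)ᵀ * of ξ = 1 := mul_eq_one_comm.mp hrows
  have := congrArg (fun M => v ⬝ᵥ (M *ᵥ v)) hcols
  rw [← mulVec_mulVec, dotProduct_mulVec, vecMul_transpose, one_mulVec] at this
  simpa [dotProduct, mulVec, sq] using this

theorem sq_norm_sum_smul_sub_le {ι U V : Type*} [Fintype ι] [AddCommGroup U] [Module ℝ U]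
    [SeminormedAddCommGroup V] [NormedSpace ℝ V] (T : U →ₗ[ℝ] V) {u : U} {us : ι → U}
    {c : ι → ℝ} (hu : u = ∑ i, c i • us i) {v : V} {vs : ι → V} {ε : ℝ}
    (hv : ‖T u - v‖ ≤ ε) (hvs : ∀ i, ‖T (us i) - vs i‖ ≤ ε) :
    ‖∑ i, c i • vs i - v‖ ^ 2 ≤ 2 * ε ^ 2 * (1 + Fintype.card ι * ∑ i, c i ^ 2) := by
  have hsplit : ∑ i, c i • vs i - v = ∑ i, c i • (vs i - T (us i)) + (T u - v) := by
    simp only [hu, map_sum, map_smul, smul_sub, sum_sub_distrib]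
    abel
  have hnorm : ‖∑ i, c i • vs i - v‖ ≤ (∑ i, |c i|) * ε + ε := by
    rw [hsplit, sum_mul]
    refine (norm_add_le _ _).trans (add_le_add ((norm_sum_le _ _).trans ?_) hv)
    refine sum_le_sum fun i _ => ?_
    rw [norm_smul, Real.norm_eq_abs, norm_sub_rev]
    exact mul_le_mul_of_nonneg_left (hvs i) (abs_nonneg _)
  have hcs : (∑ i, |c i|) ^ 2 ≤ Fintype.card ι * ∑ i, c i ^ 2 := by
    simpa only [sq_abs, card_univ] using
      sq_sum_le_card_mul_sum_sq (s := univ) (f := fun i => |c i|)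
  calc ‖∑ i, c i • vs i - v‖ ^ 2 ≤ ((∑ i, |c i|) * ε + ε) ^ 2 :=
        pow_le_pow_left₀ (norm_nonneg _) hnorm 2
    _ ≤ 2 * (((∑ i, |c i|) * ε) ^ 2 + ε ^ 2) := add_sq_le
    _ ≤ 2 * ε ^ 2 * (1 + Fintype.card ι * ∑ i, c i ^ 2) := by
        rw [mul_pow]; nlinarith [sq_nonneg ε]

section Frobenius

variable {n : ℕ}

theorem frobNorm_sq_eq_sum_norm_sq_col (A : Matrix (Fin n) (Fin n) ℝ) :
    frobNorm A ^ 2 = ∑ j, ‖(EuclideanSpace.equiv (Fin n) ℝ).symm (Aᵀ j)‖ ^ 2 := by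
  rw [frobNorm, Real.sq_sqrt (by positivity), sum_comm]
  simp [EuclideanSpace.norm_sq_eq]

theorem frobNorm_mul_le (B M : Matrix (Fin n) (Fin n) ℝ) :
    frobNorm (B * M) ≤ l2OpNorm B * frobNorm M := by
  have hcol (j : Fin n) : ‖(EuclideanSpace.equiv (Fin n) ℝ).symm ((B * M)ᵀ j)‖ ^ 2 ≤
      l2OpNorm B ^ 2 * ‖(EuclideanSpace.equiv (Fin n) ℝ).symm (Mᵀ j)‖ ^ 2 := by
    have hmulVec : (B * M)ᵀ j = B *ᵥ Mᵀ j := by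
      ext i; simp [mul_apply, mulVec, dotProduct]
    rw [← mul_pow, hmulVec]
    -- `l2OpNorm B` is by definition `‖B‖` for the L2 operator norm on matrices
    open scoped Matrix.Norms.L2Operator in
    exact pow_le_pow_left₀ (norm_nonneg _) (l2_opNorm_mulVec B _) 2
  refine le_of_pow_le_pow_left₀ two_ne_zero
    (mul_nonneg (norm_nonneg _) (Real.sqrt_nonneg _)) ?_
  rw [mul_pow, frobNorm_sq_eq_sum_norm_sq_col, frobNorm_sq_eq_sum_norm_sq_col, mul_sum]
  exact sum_le_sum fun j _ => hcol j

theorem frobNorm_pow_mul_le {B : Matrix (Fin n) (Fin n) ℝ} {ρ : ℝ} (hB : l2OpNorm B ≤ ρ)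
    {D : Matrix (Fin n) (Fin n) ℝ} {ε : ℝ} (hD : frobNorm D ≤ ε) :
    ∀ m : ℕ, frobNorm (B ^ m * D) ≤ ρ ^ m * ε
  | 0 => by simpa using hD
  | m + 1 => by
    rw [pow_succ', mul_assoc, pow_succ', mul_assoc]
    exact (frobNorm_mul_le _ _).trans <| mul_le_mul hB (frobNorm_pow_mul_le hB hD m)
      (Real.sqrt_nonneg _) ((norm_nonneg _).trans hB)

attribute [local instance] Matrix.frobeniusNormedAddCommGroup Matrix.frobeniusNormedSpace

theorem frobNorm_eq_norm (A : Matrix (Fin n) (Fin n) ℝ) : frobNorm A = ‖A‖ := by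
  simp only [frobNorm, frobenius_norm_def, Real.sqrt_eq_rpow, Real.norm_eq_abs,
    Real.rpow_two, sq_abs]

theorem frobNorm_sum_smul_sub_sq_le {ι U : Type*} [Fintype ι] [AddCommGroup U] [Module ℝ U]
    (T : U →ₗ[ℝ] Matrix (Fin n) (Fin n) ℝ) {u : U} {us : ι → U} {c : ι → ℝ}
    (hu : u = ∑ i, c i • us i) {M : Matrix (Fin n) (Fin n) ℝ}
    {Ms : ι → Matrix (Fin n) (Fin n) ℝ} {ε : ℝ} (hM : frobNorm (T u - M) ≤ ε)
    (hMs : ∀ i, frobNorm (T (us i) - Ms i) ≤ ε) :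
    frobNorm (∑ i, c i • Ms i - M) ^ 2 ≤ 2 * ε ^ 2 * (1 + Fintype.card ι * ∑ i, c i ^ 2) := by
  simp only [frobNorm_eq_norm] at *
  exact sq_norm_sum_smul_sub_le T hu hM hMs

end Frobenius

section POD

variable {E : Type*} [NormedAddCommGroup E] [InnerProductSpace ℝ E] {N : ℕ} {us : Fin N → E}
  {τ : Fin N → ℝ} {ξ : Fin N → Fin N → ℝ} {Φ : Fin N → E} {k : Fin N}

theorem inner_podMode_s18 (hN : N ≠ 0) (hτ : 0 < τ k)
    (heig : ∀ p, τ k * ξ k p = (1 / (N : ℝ)) * ∑ q, ⟪us p, us q⟫ * ξ k q)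
    (hΦ : Φ k = (Real.sqrt (N * τ k))⁻¹ • ∑ p, ξ k p • us p) (p : Fin N) :
    ⟪us p, Φ k⟫ = Real.sqrt (N * τ k) * ξ k p := by
  have hsq : Real.sqrt (N * τ k) ^ 2 = N * τ k := Real.sq_sqrt (by positivity)
  have hsum : ∑ q, ξ k q * ⟪us p, us q⟫ = N * τ k * ξ k p := by
    rw [mul_assoc, heig p, ← mul_assoc, mul_one_div_cancel (Nat.cast_ne_zero.mpr hN), one_mul]
    exact sum_congr rfl fun q _ => mul_comm _ _
  rw [hΦ, real_inner_smul_right, inner_sum]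
  simp only [real_inner_smul_right]
  rw [hsum]
  field_simp
  rw [hsq]

theorem sum_sq_inner_podMode_s18 (hN : N ≠ 0) (hτ : 0 < τ k)
    (heig : ∀ p, τ k * ξ k p = (1 / (N : ℝ)) * ∑ q, ⟪us p, us q⟫ * ξ k q)
    (hΦ : Φ k = (Real.sqrt (N * τ k))⁻¹ • ∑ p, ξ k p • us p) (hunit : ∑ p, ξ k p ^ 2 = 1) :
    ∑ p, ⟪us p, Φ k⟫ ^ 2 = N * τ k := by
  simp only [inner_podMode_s18 hN hτ heig hΦ, mul_pow, ← mul_sum, hunit, mul_one]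
  exact Real.sq_sqrt (by positivity)

theorem sum_sq_inner_podMode_div (hN : N ≠ 0) (hτ : ∀ n, 0 < τ n)
    (heig : ∀ n p, τ n * ξ n p = (1 / (N : ℝ)) * ∑ q, ⟪us p, us q⟫ * ξ n q)
    (hΦ : ∀ n, Φ n = (Real.sqrt (N * τ n))⁻¹ • ∑ p, ξ n p • us p)
    (horth : ∀ n m, ∑ p, ξ n p * ξ m p = if n = m then 1 else 0) (c : Fin N → ℝ) :
    ∑ n, ⟪∑ p, c p • us p, Φ n⟫ ^ 2 / (N * τ n) = ∑ p, c p ^ 2 := by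
  have hcoord (n : Fin N) :
      ⟪∑ p, c p • us p, Φ n⟫ ^ 2 / (N * τ n) = (∑ p, ξ n p * c p) ^ 2 := by
    simp only [sum_inner, real_inner_smul_left, inner_podMode_s18 hN (hτ n) (heig n) (hΦ n)]
    have hpos : 0 < (N : ℝ) * τ n := by have := hτ n; positivity
    have hfactor : ∑ p, c p * (Real.sqrt (N * τ n) * ξ n p) =
        Real.sqrt (N * τ n) * ∑ p, ξ n p * c p := by
      rw [mul_sum]; exact sum_congr rfl fun p _ => by ring
    rw [hfactor, mul_pow, Real.sq_sqrt hpos.le, mul_div_cancel_left₀ _ hpos.ne']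
  simp only [hcoord]
  exact sum_sq_sum_mul_eq_sum_sq horth c

end POD

/-- The constant `Z_N` of the POD setup. -/
noncomputable def podConstant {X E : Type*} [MeasurableSpace X] [NormedAddCommGroup E]
    [InnerProductSpace ℝ E] {N : ℕ} (ν : Measure X) (P : Set X) (u : X → E) (xs : Fin N → X)
    (Φ : Fin N → E) : ℝ :=
  (1 / (N : ℝ)) * ∑ n, (∫ x in P, ⟪u x, Φ n⟫ ^ 2 ∂ν) /
    (((ν P).toReal / N) * ∑ p, ⟪u (xs p), Φ n⟫ ^ 2)

theorem podConstant_eq_mean_sum_sq {X E : Type*} [MeasurableSpace X]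
    [NormedAddCommGroup E] [InnerProductSpace ℝ E] {ν : Measure X} {P : Set X}
    (hP : MeasurableSet P) (hP0 : (ν P).toReal ≠ 0) {N : ℕ} (hN : N ≠ 0) {u : X → E}
    {xs : Fin N → X} {τ : Fin N → ℝ} {ξ : Fin N → Fin N → ℝ} {Φ : Fin N → E}
    (hτ : ∀ n, 0 < τ n)
    (heig : ∀ n p, τ n * ξ n p = (1 / (N : ℝ)) * ∑ q, ⟪u (xs p), u (xs q)⟫ * ξ n q)
    (hΦ : ∀ n, Φ n = (Real.sqrt (N * τ n))⁻¹ • ∑ p, ξ n p • u (xs p))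
    (horth : ∀ n m, ∑ p, ξ n p * ξ m p = if n = m then 1 else 0)
    (hint : ∀ n, IntegrableOn (fun x => ⟪u x, Φ n⟫ ^ 2) P ν)
    {c : X → Fin N → ℝ} (hu : ∀ x ∈ P, u x = ∑ p, c x p • u (xs p)) :
    podConstant ν P u xs Φ = 1 / (ν P).toReal * ∫ x in P, ∑ p, c x p ^ 2 ∂ν := by
  have hterm (n : Fin N) : (∫ x in P, ⟪u x, Φ n⟫ ^ 2 ∂ν) /
      (((ν P).toReal / N) * ∑ p, ⟪u (xs p), Φ n⟫ ^ 2) =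
      N / (ν P).toReal * ∫ x in P, ⟪u x, Φ n⟫ ^ 2 / (N * τ n) ∂ν := by
    have hunit : ∑ p, ξ n p ^ 2 = 1 := by simpa [sq] using horth n n
    have hτn := hτ n
    rw [sum_sq_inner_podMode_s18 hN (hτ n) (heig n) (hΦ n) hunit, integral_div]
    field_simp
  have hsum :
      ∫ x in P, ∑ p, c x p ^ 2 ∂ν = ∑ n, ∫ x in P, ⟪u x, Φ n⟫ ^ 2 / (N * τ n) ∂ν := by
    rw [← integral_finsetSum _ fun n _ => (hint n).div_const _]
    refine setIntegral_congr_fun hP fun x hx => ?_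
    rw [hu x hx, sum_sq_inner_podMode_div hN hτ heig hΦ horth]
  simp only [podConstant, hterm, ← mul_sum, hsum]
  field_simp

theorem one_div_mul_setIntegral_le {X : Type*} [MeasurableSpace X] {ν : Measure X} {P : Set X}
    (hP : MeasurableSet P) (hP0 : (ν P).toReal ≠ 0) {F s : X → ℝ} (hF0 : ∀ x, 0 ≤ F x)
    (hs : IntegrableOn s P ν) {C a : ℝ} (hFs : ∀ x ∈ P, F x ≤ C * (1 + a * s x)) :
    1 / (ν P).toReal * ∫ x in P, F x ∂ν ≤
      C * (1 + a * (1 / (ν P).toReal * ∫ x in P, s x ∂ν)) := by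
  have : IsFiniteMeasure (ν.restrict P) :=
    isFiniteMeasure_restrict.mpr (ENNReal.toReal_ne_zero.mp hP0).2
  have hmono : ∫ x in P, F x ∂ν ≤ ∫ x in P, C * (1 + a * s x) ∂ν :=
    integral_mono_of_nonneg (ae_of_all _ hF0)
      (((integrable_const _).add (hs.const_mul _)).const_mul _)
      ((ae_restrict_iff' hP).mpr (ae_of_all _ hFs))
  calc 1 / (ν P).toReal * ∫ x in P, F x ∂ν
      ≤ 1 / (ν P).toReal * ∫ x in P, C * (1 + a * s x) ∂ν := by gcongr
    _ = C * (1 + a * (1 / (ν P).toReal * ∫ x in P, s x ∂ν)) := by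
        rw [integral_const_mul, integral_add (integrable_const _) (hs.const_mul _),
          integral_const_mul, setIntegral_const, smul_eq_mul, mul_one, measureReal_def]
        field_simp

theorem inverse_matrix_approximation_error_bound_general
    (r N q : ℕ) (hN : 0 < N)
    (K : Set (EuclideanSpace ℝ (Fin q)))
    (P : Set (EuclideanSpace ℝ (Fin r))) (hP : IsCompact P)
    (hPpos : 0 < (volume P).toReal)
    (g : EuclideanSpace ℝ (Fin r) → Lp ℝ 2 (volume.restrict K))
    (hg : ContinuousOn g P)
    (μs : Fin N → EuclideanSpace ℝ (Fin r)) (hμs : ∀ n, μs n ∈ P)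
    (lam : EuclideanSpace ℝ (Fin r) → Fin N → ℝ)
    (hlam : ∀ n, ContinuousOn (fun μ => lam μ n) P)
    (τ : Fin N → ℝ) (ξ : Fin N → Fin N → ℝ)
    (hτpos : ∀ n, 0 < τ n)
    (heig : ∀ n p, τ n * ξ n p =
        (1 / (N : ℝ)) * ∑ q', ⟪g (μs p), g (μs q')⟫ * ξ n q')
    (horth : ∀ n m, ∑ p, ξ n p * ξ m p = if n = m then (1 : ℝ) else 0)
    (Φ : Fin N → Lp ℝ 2 (volume.restrict K))
    (hΦ : ∀ n, Φ n = (Real.sqrt (N * τ n))⁻¹ • ∑ p, ξ n p • g (μs p))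
    (Z : ℝ)
    (hZ : Z = (1 / (N : ℝ)) * ∑ n,
        (∫ μ in P, ⟪g μ, Φ n⟫ ^ 2) /
          (((volume P).toReal / N) * ∑ p, ⟪g (μs p), Φ n⟫ ^ 2))
    -- the parametrized matrices and the fixed-point scheme
    (d Nhat : ℕ) (α : Fin d → EuclideanSpace ℝ (Fin r) → ℝ)
    (A : Fin d → Matrix (Fin Nhat) (Fin Nhat) ℝ)
    (hAinv : ∀ μ ∈ P, IsUnit (∑ l, α l μ • A l))
    (Ψ₀ : Matrix (Fin Nhat) (Fin Nhat) ℝ)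
    (ρ : ℝ)
    (hρbound : ∀ μ ∈ P, l2OpNorm (1 - Ψ₀⁻¹ * ∑ l, α l μ • A l) ≤ ρ)
    (X₀ : Matrix (Fin Nhat) (Fin Nhat) ℝ)
    (ε₀ : ℝ)
    (hX₀ : ∀ μ ∈ P, frobNorm (X₀ - (∑ l, α l μ • A l)⁻¹) ≤ ε₀)
    (m : ℕ)
    (Xm : Lp ℝ 2 (volume.restrict K) →ₗ[ℝ] Matrix (Fin Nhat) (Fin Nhat) ℝ)
    (hXm : ∀ μ ∈ P, Xm (g μ) =
        (1 - Ψ₀⁻¹ * ∑ l, α l μ • A l) ^ m * X₀ +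
          (∑ k ∈ Finset.range m, (1 - Ψ₀⁻¹ * ∑ l, α l μ • A l) ^ k) * Ψ₀⁻¹)
    -- exact interpolation of g on P
    (hexact : ∀ μ ∈ P, g μ = ∑ n, lam μ n • g (μs n)) :
    (1 / (volume P).toReal) *
        ∫ μ in P,
          frobNorm ((∑ n, lam μ n • (∑ l, α l (μs n) • A l)⁻¹) -
            (∑ l, α l μ • A l)⁻¹) ^ 2 ≤
      3 * ε₀ ^ 2 * ρ ^ (2 * m) * (1 + 2 * (N : ℝ) ^ 2 * Z) := by
  set ε := ρ ^ m * ε₀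
  have hiterate : ∀ μ ∈ P, frobNorm (Xm (g μ) - (∑ l, α l μ • A l)⁻¹) ≤ ε := fun μ hμ => by
    rw [hXm μ hμ, pow_mul_add_geom_sum_mul_sub_eq
      (mul_nonsing_inv _ ((isUnit_iff_isUnit_det _).mp (hAinv μ hμ)))]
    exact frobNorm_pow_mul_le (hρbound μ hμ) (hX₀ μ hμ) m
  have hpointwise : ∀ μ ∈ P, frobNorm ((∑ n, lam μ n • (∑ l, α l (μs n) • A l)⁻¹) -
      (∑ l, α l μ • A l)⁻¹) ^ 2 ≤ 2 * ε ^ 2 * (1 + N * ∑ n, lam μ n ^ 2) := fun μ hμ => by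
    simpa using frobNorm_sum_smul_sub_sq_le Xm (hexact μ hμ) (hiterate μ hμ)
      fun n => hiterate (μs n) (hμs n)
  have hZmean : Z = 1 / (volume P).toReal * ∫ μ in P, ∑ n, lam μ n ^ 2 :=
    hZ.trans <| podConstant_eq_mean_sum_sq hP.measurableSet hPpos.ne' hN.ne' hτpos heig hΦ
      horth (fun n => ((hg.inner continuousOn_const).pow 2).integrableOn_compact hP) hexact
  have hZ0 : 0 ≤ Z := hZmean ▸ mul_nonneg (by positivity)
    (setIntegral_nonneg hP.measurableSet fun _ _ => by positivity)
  have hNN : (N : ℝ) ≤ N ^ 2 := by exact_mod_cast Nat.le_self_pow two_ne_zero N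
  calc _ ≤ 2 * ε ^ 2 * (1 + N * Z) := hZmean ▸ one_div_mul_setIntegral_le hP.measurableSet
        hPpos.ne' (fun _ => sq_nonneg _)
        ((continuousOn_finsetSum _ fun n _ => (hlam n).pow 2).integrableOn_compact hP) hpointwise
    _ ≤ 3 * ε ^ 2 * (1 + 2 * N ^ 2 * Z) := by
        nlinarith [mul_nonneg (sq_nonneg ε) hZ0,
          mul_nonneg (mul_nonneg (sq_nonneg ε) hZ0) (sub_nonneg.2 hNN)]
    _ = 3 * ε₀ ^ 2 * ρ ^ (2 * m) * (1 + 2 * (N : ℝ) ^ 2 * Z) := by ring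

/-- (Corollary, inverse-matrix case.) In the approximation setting with
`V = ℝ^{N̂×N̂}` (Frobenius inner product) and `L_μ = A_μ⁻¹`, where
`A_μ = ∑ l, α l (μ) • A l` is invertible on `P`, `Ψ₀` is invertible with
`‖I − Ψ₀⁻¹ A_μ‖₂ ≤ ρ < 1` on `P`, `‖X₀ − A_μ⁻¹‖_F ≤ ε₀` on `P`, `X_m` is the continuous
linear map realizing the `m`-th iterate of the fixed-point scheme, and the interpolation is
exact (`g_μ = ∑ n, λ n (μ) • g (μ n)` on `P`), one has
`(1/|P|) ∫_P ‖∑ n, λ n (μ) • A_{μ n}⁻¹ − A_μ⁻¹‖_F² dμ ≤ 3 ε₀² ρ^{2m} (1 + 2 N² Z_N)`. -/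
theorem inverse_matrix_approximation_error_bound
    (r N q : ℕ) (hN : 0 < N)
    (K : Set (EuclideanSpace ℝ (Fin q)))
    (hKb : IsBounded K) (hKm : MeasurableSet K)
    (P : Set (EuclideanSpace ℝ (Fin r))) (hP : IsCompact P)
    (hPpos : 0 < (volume P).toReal)
    (g : EuclideanSpace ℝ (Fin r) → Lp ℝ 2 (volume.restrict K))
    (hg : ContinuousOn g P)
    (μs : Fin N → EuclideanSpace ℝ (Fin r)) (hμs : ∀ n, μs n ∈ P)
    (hli : LinearIndependent ℝ (fun n => g (μs n)))
    (lam : EuclideanSpace ℝ (Fin r) → Fin N → ℝ)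
    (hlam : ∀ n, ContinuousOn (fun μ => lam μ n) P)
    (τ : Fin N → ℝ) (ξ : Fin N → Fin N → ℝ)
    (hτmono : ∀ i j : Fin N, i ≤ j → τ j ≤ τ i)
    (hτpos : ∀ n, 0 < τ n)
    (heig : ∀ n p, τ n * ξ n p =
        (1 / (N : ℝ)) * ∑ q', ⟪g (μs p), g (μs q')⟫ * ξ n q')
    (horth : ∀ n m, ∑ p, ξ n p * ξ m p = if n = m then (1 : ℝ) else 0)
    (Φ : Fin N → Lp ℝ 2 (volume.restrict K))
    (hΦ : ∀ n, Φ n = (Real.sqrt (N * τ n))⁻¹ • ∑ p, ξ n p • g (μs p))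
    (Z : ℝ)
    (hZ : Z = (1 / (N : ℝ)) * ∑ n,
        (∫ μ in P, ⟪g μ, Φ n⟫ ^ 2) /
          (((volume P).toReal / N) * ∑ p, ⟪g (μs p), Φ n⟫ ^ 2))
    -- the parametrized matrices and the fixed-point scheme
    (d Nhat : ℕ) (α : Fin d → EuclideanSpace ℝ (Fin r) → ℝ)
    (hα : ∀ l, ContinuousOn (α l) P)
    (A : Fin d → Matrix (Fin Nhat) (Fin Nhat) ℝ)
    (hAinv : ∀ μ ∈ P, IsUnit (∑ l, α l μ • A l))
    (Ψ₀ : Matrix (Fin Nhat) (Fin Nhat) ℝ) (hΨ₀ : IsUnit Ψ₀)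
    (ρ : ℝ) (hρ0 : 0 ≤ ρ) (hρ1 : ρ < 1)
    (hρbound : ∀ μ ∈ P, l2OpNorm (1 - Ψ₀⁻¹ * ∑ l, α l μ • A l) ≤ ρ)
    (X₀ : Matrix (Fin Nhat) (Fin Nhat) ℝ)
    (ε₀ : ℝ) (hε₀ : 0 ≤ ε₀)
    (hX₀ : ∀ μ ∈ P, frobNorm (X₀ - (∑ l, α l μ • A l)⁻¹) ≤ ε₀)
    (m : ℕ)
    (Xm : Lp ℝ 2 (volume.restrict K) →ₗ[ℝ] Matrix (Fin Nhat) (Fin Nhat) ℝ)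
    (hXmc : Continuous Xm)
    (hXm : ∀ μ ∈ P, Xm (g μ) =
        (1 - Ψ₀⁻¹ * ∑ l, α l μ • A l) ^ m * X₀ +
          (∑ k ∈ Finset.range m, (1 - Ψ₀⁻¹ * ∑ l, α l μ • A l) ^ k) * Ψ₀⁻¹)
    -- exact interpolation of g on P
    (hexact : ∀ μ ∈ P, g μ = ∑ n, lam μ n • g (μs n)) :
    (1 / (volume P).toReal) *
        ∫ μ in P,
          frobNorm ((∑ n, lam μ n • (∑ l, α l (μs n) • A l)⁻¹) -
            (∑ l, α l μ • A l)⁻¹) ^ 2 ≤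
      3 * ε₀ ^ 2 * ρ ^ (2 * m) * (1 + 2 * (N : ℝ) ^ 2 * Z) :=
  inverse_matrix_approximation_error_bound_general r N q hN K P hP hPpos g hg μs hμs lam hlam τ ξ
    hτpos heig horth Φ hΦ Z hZ d Nhat α A hAinv Ψ₀ ρ hρbound X₀ ε₀ hX₀ m Xm hXm hexact
end
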